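/- If a query S₀ loops with respect to a program P (has an infinite derivation), then every query S₀' that is more general than S₀ also loops with respect to P. -/

import Mathlib

/- A formalization of binary CLP(C): terms, constraints, queries, rules,
   derivation steps, loops, projections, filters, DN / DNlog / DNsyn. -/

namespace CLP

/-- First-order terms over a signature of function symbols `F` with arities `arF`. -/
inductive Tm (F : Type) (arF : F → ℕ) : Type
  | var : ℕ → Tm F arF
  | app : (f : F) → (Fin (arF f) → Tm F arF) → Tm F arF

variable {F : Type} {arF : F → ℕ} {Pc : Type} {arP : Pc → ℕ}
  {Prd : Type} {arPrd : Prd → ℕ} {D : Type}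

/-- Variables of a term. -/
def Tm.fv : Tm F arF → Finset ℕ
  | .var x => {x}
  | .app _ ts => Finset.univ.biUnion fun i => (ts i).fv

/-- Apply a variable substitution to a term. -/
def Tm.rename (σ : ℕ → ℕ) : Tm F arF → Tm F arF
  | .var x => .var (σ x)
  | .app f ts => .app f fun i => (ts i).rename σ

/-- Finite conjunctions of primitive constraints (including equality). -/
inductive Con (F : Type) (arF : F → ℕ) (Pc : Type) (arP : Pc → ℕ) : Type
  | tru : Con F arF Pc arP
  | eq : Tm F arF → Tm F arF → Con F arF Pc arP
  | prim : (c : Pc) → (Fin (arP c) → Tm F arF) → Con F arF Pc arP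
  | and : Con F arF Pc arP → Con F arF Pc arP → Con F arF Pc arP

/-- Variables of a constraint. -/
def Con.fv : Con F arF Pc arP → Finset ℕ
  | .tru => ∅
  | .eq s t => s.fv ∪ t.fv
  | .prim _ ts => Finset.univ.biUnion fun i => (ts i).fv
  | .and c d => c.fv ∪ d.fv

/-- Apply a variable substitution to a constraint. -/
def Con.rename (σ : ℕ → ℕ) : Con F arF Pc arP → Con F arF Pc arP
  | .tru => .tru
  | .eq s t => .eq (s.rename σ) (t.rename σ)
  | .prim c ts => .prim c fun i => (ts i).rename σ
  | .and c d => .and (c.rename σ) (d.rename σ)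

/-- The domain of computation `D_C`: an interpretation of the function and
constraint-predicate symbols over a domain `D`. -/
structure Interp (F : Type) (arF : F → ℕ) (Pc : Type) (arP : Pc → ℕ) (D : Type) where
  fn : (f : F) → (Fin (arF f) → D) → D
  pr : (c : Pc) → (Fin (arP c) → D) → Prop

/-- Evaluation of a term under a valuation `v : Var → D`. -/
def Tm.eval (If : (f : F) → (Fin (arF f) → D) → D) (v : ℕ → D) : Tm F arF → D
  | .var x => v x
  | .app f ts => If f fun i => (ts i).eval If v

/-- `D_C ⊨_v c`. -/
def Con.Sat (I : Interp F arF Pc arP D) (v : ℕ → D) : Con F arF Pc arP → Prop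
  | .tru => True
  | .eq s t => s.eval I.fn v = t.eval I.fn v
  | .prim c ts => I.pr c fun i => (ts i).eval I.fn v
  | .and c d => c.Sat I v ∧ d.Sat I v

/-- A query `⟨p(t̃) | d⟩`. -/
structure Query (F : Type) (arF : F → ℕ) (Pc : Type) (arP : Pc → ℕ)
    (Prd : Type) (arPrd : Prd → ℕ) where
  p : Prd
  args : Fin (arPrd p) → Tm F arF
  con : Con F arF Pc arP

/-- Variables of a query. -/
def Query.fv (S : Query F arF Pc arP Prd arPrd) : Finset ℕ :=
  (Finset.univ.biUnion fun i => (S.args i).fv) ∪ S.con.fv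

/-- Apply a variable substitution to a query. -/
def Query.rename (σ : ℕ → ℕ) (S : Query F arF Pc arP Prd arPrd) :
    Query F arF Pc arP Prd arPrd :=
  ⟨S.p, fun i => (S.args i).rename σ, S.con.rename σ⟩

/-- The set `[S]` of atoms (predicate applied to domain values) described by a query `S`. -/
def Query.set (I : Interp F arF Pc arP D) (S : Query F arF Pc arP Prd arPrd) :
    Set (Σ p : Prd, Fin (arPrd p) → D) :=
  { a | ∃ v : ℕ → D, S.con.Sat I v ∧ a = ⟨S.p, fun i => (S.args i).eval I.fn v⟩ }

/-- `S'` is more general than `S` iff `[S] ⊆ [S']`. -/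
def MoreGen (I : Interp F arF Pc arP D) (S' S : Query F arF Pc arP Prd arPrd) : Prop :=
  S.set I ⊆ S'.set I

/-- A binary rule `p(s̃) ← c ◇ q(t̃)`. -/
structure Rule (F : Type) (arF : F → ℕ) (Pc : Type) (arP : Pc → ℕ)
    (Prd : Type) (arPrd : Prd → ℕ) where
  hp : Prd
  hargs : Fin (arPrd hp) → Tm F arF
  con : Con F arF Pc arP
  bp : Prd
  bargs : Fin (arPrd bp) → Tm F arF

/-- Variables of a rule. -/
def Rule.fv (r : Rule F arF Pc arP Prd arPrd) : Finset ℕ :=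
  (Finset.univ.biUnion fun i => (r.hargs i).fv) ∪ r.con.fv ∪
    (Finset.univ.biUnion fun i => (r.bargs i).fv)

/-- Apply a variable substitution to a rule. -/
def Rule.rename (σ : ℕ → ℕ) (r : Rule F arF Pc arP Prd arPrd) : Rule F arF Pc arP Prd arPrd :=
  ⟨r.hp, fun i => (r.hargs i).rename σ, r.con.rename σ, r.bp, fun i => (r.bargs i).rename σ⟩

/-- `r'` is a variant of `r`: obtained by renaming the variables by a bijection. -/
def Rule.IsVariant (r r' : Rule F arF Pc arP Prd arPrd) : Prop :=
  ∃ ρ : ℕ ≃ ℕ, r' = r.rename ρ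

/-- The query `⟨H | c⟩` of a rule `H ← c ◇ B`. -/
def Rule.headQuery (r : Rule F arF Pc arP Prd arPrd) : Query F arF Pc arP Prd arPrd :=
  ⟨r.hp, r.hargs, r.con⟩

/-- The query `⟨B | c⟩` of a rule `H ← c ◇ B`. -/
def Rule.bodyQuery (r : Rule F arF Pc arP Prd arPrd) : Query F arF Pc arP Prd arPrd :=
  ⟨r.bp, r.bargs, r.con⟩

/-- The constraint `ũ = w̃` for two sequences of terms. -/
def argsEqCon {n : ℕ} (u w : Fin n → Tm F arF) : Con F arF Pc arP :=
  (List.ofFn fun i => Con.eq (u i) (w i)).foldr .and .tru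

/-- The constraint `s̃' = ũ ∧ c' ∧ d` of the query resulting from a derivation step of
`S = ⟨p(ũ) | d⟩` with input rule `r' = p(s̃') ← c' ◇ q(t̃')`. -/
def stepCon (r' : Rule F arF Pc arP Prd arPrd) (S : Query F arF Pc arP Prd arPrd)
    (h : r'.hp = S.p) : Con F arF Pc arP :=
  Con.and
    (argsEqCon (fun i : Fin (arPrd S.p) => r'.hargs (Fin.cast (congrArg arPrd h).symm i)) S.args)
    (Con.and r'.con S.con)

/-- Derivation step of `S` using the (already renamed-apart) input rule `r'`:
the constraint `s̃' = ũ ∧ c' ∧ d` must be satisfiable in `D_C`, and the resulting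
query is `⟨q(t̃') | s̃' = ũ ∧ c' ∧ d⟩`. -/
def StepWith (I : Interp F arF Pc arP D) (r' : Rule F arF Pc arP Prd arPrd)
    (S T : Query F arF Pc arP Prd arPrd) : Prop :=
  ∃ h : r'.hp = S.p, (∃ v : ℕ → D, (stepCon r' S h).Sat I v) ∧
    T = ⟨r'.bp, r'.bargs, stepCon r' S h⟩

/-- Derivation step `S ⟹_r T`: there is a variant `r'` of `r`, variable disjoint
with `S`, which is an input rule for a step from `S` to `T`. -/
def Step (I : Interp F arF Pc arP D) (r : Rule F arF Pc arP Prd arPrd)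
    (S T : Query F arF Pc arP Prd arPrd) : Prop :=
  ∃ r' : Rule F arF Pc arP Prd arPrd,
    r.IsVariant r' ∧ Disjoint r'.fv S.fv ∧ StepWith I r' S T

/-- `S₀` loops w.r.t. the program `P`: there is an infinite derivation of `P ∪ {S₀}`,
i.e. an infinite sequence of derivation steps whose input rules are variants of rules
of `P`, variable disjoint from `S₀` and from the input rules used at earlier steps
(standardization apart). -/
def Loops (I : Interp F arF Pc arP D) (P : Set (Rule F arF Pc arP Prd arPrd))
    (S₀ : Query F arF Pc arP Prd arPrd) : Prop :=
  ∃ (S : ℕ → Query F arF Pc arP Prd arPrd) (rv : ℕ → Rule F arF Pc arP Prd arPrd),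
    S 0 = S₀ ∧
    ∀ n : ℕ, (∃ r ∈ P, r.IsVariant (rv n)) ∧
      Disjoint (rv n).fv S₀.fv ∧ (∀ m < n, Disjoint (rv n).fv (rv m).fv) ∧
      StepWith I (rv n) (S n) (S (n + 1))

/-! ## Sets of positions, projections, filters -/

/-- The set `[S|τ]` of projected atoms described by the projection of a query on a
set of positions `τ`. -/
def Query.projSet (I : Interp F arF Pc arP D) (τ : ∀ p : Prd, Set (Fin (arPrd p)))
    (S : Query F arF Pc arP Prd arPrd) :
    Set (Σ p : Prd, {i : Fin (arPrd p) // i ∈ τ p} → D) :=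
  { a | ∃ v : ℕ → D, S.con.Sat I v ∧ a = ⟨S.p, fun i => (S.args i.1).eval I.fn v⟩ }

/-- The complement `τ̄` of a set of positions. -/
def complPos (τ : ∀ p : Prd, Set (Fin (arPrd p))) : ∀ p : Prd, Set (Fin (arPrd p)) :=
  fun p => (τ p)ᶜ

/-- A query over a projected predicate `p|τ`. -/
structure PQuery (F : Type) (arF : F → ℕ) (Pc : Type) (arP : Pc → ℕ)
    {Prd : Type} {arPrd : Prd → ℕ} (τ : ∀ p : Prd, Set (Fin (arPrd p))) (p : Prd) where
  args : {i : Fin (arPrd p) // i ∈ τ p} → Tm F arF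
  con : Con F arF Pc arP

/-- The set of projected atoms described by a projected query. -/
def PQuery.set (I : Interp F arF Pc arP D) {τ : ∀ p : Prd, Set (Fin (arPrd p))} {p : Prd}
    (Q : PQuery F arF Pc arP τ p) :
    Set (Σ q : Prd, {i : Fin (arPrd q) // i ∈ τ q} → D) :=
  { a | ∃ v : ℕ → D, Q.con.Sat I v ∧ a = ⟨p, fun i => (Q.args i).eval I.fn v⟩ }

/-- A filter `Δ = (τ, δ)`: a set of positions together with, for each predicate `p`,
a query `δ(p)` over the projected predicate `p|τ` with satisfiable constraint. -/
structure Filt {F : Type} {arF : F → ℕ} {Pc : Type} {arP : Pc → ℕ} {D : Type}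
    (I : Interp F arF Pc arP D) (Prd : Type) (arPrd : Prd → ℕ) where
  τ : ∀ p : Prd, Set (Fin (arPrd p))
  δ : ∀ p : Prd, PQuery F arF Pc arP τ p
  δ_sat : ∀ p : Prd, ∃ v : ℕ → D, (δ p).con.Sat I v

variable {I : Interp F arF Pc arP D}

/-- A query `S` satisfies the filter `Δ` iff `[S|τ] ⊆ [δ(rel(S))]`. -/
def Filt.Satisfies (Δ : Filt I Prd arPrd) (S : Query F arF Pc arP Prd arPrd) : Prop :=
  S.projSet I Δ.τ ⊆ (Δ.δ S.p).set I

/-- `S'` is `Δ`-more general than `S`: `S'|τ̄` is more general than `S|τ̄`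
and `S'` satisfies `Δ`. -/
def Filt.DeltaMoreGen (Δ : Filt I Prd arPrd) (S' S : Query F arF Pc arP Prd arPrd) : Prop :=
  S.projSet I (complPos Δ.τ) ⊆ S'.projSet I (complPos Δ.τ) ∧ Δ.Satisfies S'

/-- `Δ` is derivation neutral (DN) for `r`. -/
def Filt.DN (Δ : Filt I Prd arPrd) (r : Rule F arF Pc arP Prd arPrd) : Prop :=
  ∀ S T, Step I r S T → ∀ S', Δ.DeltaMoreGen S' S →
    ∃ T', Step I r S' T' ∧ Δ.DeltaMoreGen T' T

/-! ## Normalized rules and DNlog -/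

/-- A normalized rule `p(X̃) ← c ◇ q(Ỹ)` where `X̃, Ỹ` are disjoint sequences of
distinct variables. -/
structure NRule (F : Type) (arF : F → ℕ) (Pc : Type) (arP : Pc → ℕ)
    (Prd : Type) (arPrd : Prd → ℕ) where
  hp : Prd
  X : Fin (arPrd hp) → ℕ
  bp : Prd
  Y : Fin (arPrd bp) → ℕ
  hX : Function.Injective X
  hY : Function.Injective Y
  hXY : ∀ i j, X i ≠ Y j
  con : Con F arF Pc arP

/-- The underlying rule of a normalized rule. -/
def NRule.toRule (r : NRule F arF Pc arP Prd arPrd) : Rule F arF Pc arP Prd arPrd :=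
  ⟨r.hp, fun i => .var (r.X i), r.con, r.bp, fun i => .var (r.Y i)⟩

/-- `local_var(r) = Var(c) ∖ (Var(X̃) ∪ Var(Ỹ))`. -/
def NRule.localVar (r : NRule F arF Pc arP Prd arPrd) : Set ℕ :=
  ↑r.con.fv \ (Set.range r.X ∪ Set.range r.Y)

/-- `v` and `w` agree on all variables outside `W`. -/
def agreesOff (W : Set ℕ) (v w : ℕ → D) : Prop := ∀ x ∉ W, v x = w x

/-- Semantics under `v` of the formula `sat(s̃, Q) = ∃_{Var(Q')} (s̃ = ũ' ∧ d')`,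
`Q'` a variable-disjoint variant of `Q = ⟨p|τ(ũ) | d⟩`. -/
def satFor (I : Interp F arF Pc arP D) {τ : ∀ p : Prd, Set (Fin (arPrd p))} {p : Prd}
    (s : {i : Fin (arPrd p) // i ∈ τ p} → Tm F arF) (Q : PQuery F arF Pc arP τ p)
    (v : ℕ → D) : Prop :=
  ∃ w : ℕ → D, Q.con.Sat I w ∧ ∀ i, (s i).eval I.fn v = (Q.args i).eval I.fn w

/-- `Δ` is DNlog for a normalized rule `r = p(X̃) ← c ◇ q(Ỹ)`:
`D_C ⊨ c → ∀_{X̃|τ} [ sat(X̃|τ, δ(p)) → ∃_Y (sat(Ỹ|τ, δ(q)) ∧ c) ]` where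
`Y = Var(Ỹ|τ) ∪ local_var(r)`. -/
def Filt.DNlog (Δ : Filt I Prd arPrd) (r : NRule F arF Pc arP Prd arPrd) : Prop :=
  ∀ v : ℕ → D, r.con.Sat I v →
    ∀ v₁ : ℕ → D, agreesOff (r.X '' Δ.τ r.hp) v₁ v →
      satFor I (fun i => Tm.var (r.X i.1)) (Δ.δ r.hp) v₁ →
        ∃ v₂ : ℕ → D,
          agreesOff (r.Y '' Δ.τ r.bp ∪ r.localVar) v₂ v₁ ∧
          satFor I (fun i => Tm.var (r.Y i.1)) (Δ.δ r.bp) v₂ ∧ r.con.Sat I v₂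

/-! ## Flat rules and DNsyn -/

/-- Variables of a sequence of terms. -/
def varsOf {n : ℕ} (s : Fin n → Tm F arF) : Finset ℕ :=
  Finset.univ.biUnion fun i => (s i).fv

/-- Variables of the projection of a sequence of terms on a set of positions. -/
def varsOfProj {n : ℕ} (σ : Set (Fin n)) (s : Fin n → Tm F arF) : Set ℕ :=
  ⋃ i : {i : Fin n // i ∈ σ}, ↑(s i.1).fv

/-- A flat rule `p(X̃) ← (X̃ = s̃ ∧ Ỹ = t̃) ◇ q(Ỹ)` with `Var(s̃, t̃)` local. -/
structure FlatRule (F : Type) (arF : F → ℕ) (Pc : Type) (arP : Pc → ℕ)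
    (Prd : Type) (arPrd : Prd → ℕ) extends NRule F arF Pc arP Prd arPrd where
  s : Fin (arPrd hp) → Tm F arF
  t : Fin (arPrd bp) → Tm F arF
  con_eq : con = Con.and (argsEqCon (fun i => Tm.var (X i)) s)
                         (argsEqCon (fun i => Tm.var (Y i)) t)
  local_args : ∀ x ∈ varsOf s ∪ varsOf t, x ∉ Set.range X ∪ Set.range Y

/-! ## The constraint domain Term (logic programming) -/

/-- Finite trees (ground terms) over `F`. -/
inductive GTm (F : Type) (arF : F → ℕ) : Type
  | app : (f : F) → (Fin (arF f) → GTm F arF) → GTm F arF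

/-- Arities for the empty set of constraint-predicate symbols (only `=` is available). -/
def emptyAr : Empty → ℕ := fun c => c.elim

/-- The domain of computation of the constraint domain `Term`: the algebra of
finite trees, with no primitive constraints but equality. -/
def termInterp (F : Type) (arF : F → ℕ) : Interp F arF Empty emptyAr (GTm F arF) :=
  ⟨fun f ts => GTm.app f ts, fun c => c.elim⟩

end CLP

/-! A step from `S` with input rule `r` determines `[T]` from `[S]` alone: `[T]` is contained in
the set of body atoms that `r` derives from head atoms in `[S]`, with equality when `r` and `S`
share no variable. That set grows with `[S]` and does not change when `r` is renamed, so a step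
`S ⟹ T` lifts to a step `S' ⟹ T'` with a variant of the same rule and `[T] ⊆ [T']` whenever
`[S] ⊆ [S']`. Renaming the input rules of the derivation of `S₀` into pairwise disjoint blocks of
variables fresh for `S₀'` keeps every lifted step standardized apart, so the lifts chain into an
infinite derivation of `S₀'`. -/

theorem Set.Finite.exists_perm_extend {α : Type*} [Infinite α] {s : Set α} (hs : s.Finite)
    {f : α → α} (hf : s.InjOn f) : ∃ g : Equiv.Perm α, ∀ x ∈ s, g x = f x := by
  obtain ⟨g, hg⟩ := Cardinal.extend_function_of_lt ⟨s.domRestrict f, hf.injective⟩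
    (hs.lt_aleph0.trans_le (Cardinal.aleph0_le_mk α)) ⟨Equiv.refl α⟩
  exact ⟨g, fun x hx => hg ⟨x, hx⟩⟩

theorem exists_seq_of_forall_exists {α : Type*} (P : ℕ → α → Prop) (R : ℕ → α → α → Prop)
    {a : α} (h₀ : P 0 a) (h : ∀ n x, P n x → ∃ y, R n x y ∧ P (n + 1) y) :
    ∃ f : ℕ → α, f 0 = a ∧ ∀ n, R n (f n) (f (n + 1)) := by
  choose next hnext hP using h
  let f : ∀ n, {x // P n x} := fun n =>
    Nat.rec ⟨a, h₀⟩ (fun k x => ⟨next k x.1 x.2, hP k x.1 x.2⟩) n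
  exact ⟨fun n => (f n).1, rfl, fun n => hnext n (f n).1 (f n).2⟩

namespace CLP

variable {F : Type} {arF : F → ℕ} {Pc : Type} {arP : Pc → ℕ}
  {Prd : Type} {arPrd : Prd → ℕ} {D : Type}

theorem Tm.eval_rename (If : (f : F) → (Fin (arF f) → D) → D) (σ : ℕ → ℕ) (v : ℕ → D) :
    ∀ t : Tm F arF, (t.rename σ).eval If v = t.eval If (v ∘ σ)
  | .var _ => rfl
  | .app f ts => congrArg (If f) (funext fun i => eval_rename If σ v (ts i))

theorem Tm.eval_congr (If : (f : F) → (Fin (arF f) → D) → D) {v w : ℕ → D} :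
    ∀ t : Tm F arF, (∀ x ∈ t.fv, v x = w x) → t.eval If v = t.eval If w
  | .var x, h => h x (Finset.mem_singleton_self x)
  | .app f ts, h => congrArg (If f) (funext fun i => eval_congr If (ts i) fun x hx =>
      h x (Finset.mem_biUnion.2 ⟨i, Finset.mem_univ i, hx⟩))

theorem Tm.fv_rename (σ : ℕ → ℕ) : ∀ t : Tm F arF, (t.rename σ).fv = t.fv.image σ
  | .var _ => by simp [rename, fv]
  | .app f ts => by simp [rename, fv, Finset.biUnion_image, fv_rename σ (ts _)]

theorem Tm.rename_rename (σ τ : ℕ → ℕ) :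
    ∀ t : Tm F arF, (t.rename σ).rename τ = t.rename (τ ∘ σ)
  | .var _ => rfl
  | .app f ts => congrArg (app f) (funext fun i => rename_rename σ τ (ts i))

theorem Con.sat_rename (I : Interp F arF Pc arP D) (σ : ℕ → ℕ) (v : ℕ → D) :
    ∀ c : Con F arF Pc arP, (c.rename σ).Sat I v ↔ c.Sat I (v ∘ σ)
  | .tru => Iff.rfl
  | .eq s t => by simp only [rename, Sat, Tm.eval_rename]
  | .prim c ts => by simp only [rename, Sat, Tm.eval_rename]
  | .and c d => and_congr (sat_rename I σ v c) (sat_rename I σ v d)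

theorem Con.sat_congr (I : Interp F arF Pc arP D) {v w : ℕ → D} :
    ∀ c : Con F arF Pc arP, (∀ x ∈ c.fv, v x = w x) → (c.Sat I v ↔ c.Sat I w)
  | .tru, _ => Iff.rfl
  | .eq s t, h => by
    simp only [Sat, fv, Finset.mem_union] at h ⊢
    rw [Tm.eval_congr I.fn s fun x hx => h x (.inl hx),
      Tm.eval_congr I.fn t fun x hx => h x (.inr hx)]
  | .prim c ts, h => by
    simp only [Sat]
    rw [funext fun i => Tm.eval_congr I.fn (ts i) fun x hx =>
      h x (Finset.mem_biUnion.2 ⟨i, Finset.mem_univ i, hx⟩)]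
  | .and c d, h => and_congr
      (sat_congr I c fun x hx => h x (Finset.mem_union_left _ hx))
      (sat_congr I d fun x hx => h x (Finset.mem_union_right _ hx))

theorem Con.fv_rename (σ : ℕ → ℕ) : ∀ c : Con F arF Pc arP, (c.rename σ).fv = c.fv.image σ
  | .tru => rfl
  | .eq s t => by simp [rename, fv, Tm.fv_rename, Finset.image_union]
  | .prim c ts => by simp [rename, fv, Tm.fv_rename, Finset.biUnion_image]
  | .and c d => by simp [rename, fv, fv_rename σ c, fv_rename σ d, Finset.image_union]

theorem Con.rename_rename (σ τ : ℕ → ℕ) :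
    ∀ c : Con F arF Pc arP, (c.rename σ).rename τ = c.rename (τ ∘ σ)
  | .tru => rfl
  | .eq s t => by simp [rename, Tm.rename_rename]
  | .prim c ts => by simp [rename, Tm.rename_rename]
  | .and c d => by simp [rename, rename_rename σ τ c, rename_rename σ τ d]

theorem Rule.fv_rename (σ : ℕ → ℕ) (r : Rule F arF Pc arP Prd arPrd) :
    (r.rename σ).fv = r.fv.image σ := by
  simp only [rename, fv, Tm.fv_rename, Con.fv_rename, Finset.image_union, Finset.biUnion_image]
  rfl

theorem Rule.rename_rename (σ τ : ℕ → ℕ) (r : Rule F arF Pc arP Prd arPrd) :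
    (r.rename σ).rename τ = r.rename (τ ∘ σ) := by
  simp [rename, Tm.rename_rename, Con.rename_rename]

theorem Rule.IsVariant.trans {r r' r'' : Rule F arF Pc arP Prd arPrd} (h₁ : r.IsVariant r')
    (h₂ : r'.IsVariant r'') : r.IsVariant r'' := by
  obtain ⟨ρ, rfl⟩ := h₁
  obtain ⟨ρ', rfl⟩ := h₂
  exact ⟨ρ.trans ρ', rename_rename ρ ρ' r⟩

theorem Rule.exists_variant_fv_subset_range (r : Rule F arF Pc arP Prd arPrd) {j : ℕ → ℕ}
    (hj : j.Injective) : ∃ r', r.IsVariant r' ∧ ↑r'.fv ⊆ Set.range j := by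
  obtain ⟨ρ, hρ⟩ := r.fv.finite_toSet.exists_perm_extend hj.injOn
  refine ⟨r.rename ρ, ⟨ρ, rfl⟩, fun x hx => ?_⟩
  obtain ⟨y, hy, rfl⟩ := Finset.mem_image.1 (r.fv_rename ρ ▸ hx)
  exact ⟨y, (hρ y hy).symm⟩

theorem exists_variants_pairwise_disjoint (rv : ℕ → Rule F arF Pc arP Prd arPrd)
    (V : Finset ℕ) : ∃ rv' : ℕ → Rule F arF Pc arP Prd arPrd, (∀ n, (rv n).IsVariant (rv' n)) ∧
      (∀ n, Disjoint (rv' n).fv V) ∧ Pairwise fun m n => Disjoint (rv' m).fv (rv' n).fv := by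
  set N := V.sup id + 1
  have hblock (n : ℕ) := (rv n).exists_variant_fv_subset_range (j := fun a => N + Nat.pair n a)
    fun a b hab => (Nat.pair_eq_pair.1 (Nat.add_left_cancel hab)).2
  choose rv' hvar hblock using hblock
  refine ⟨rv', hvar, fun n => Finset.disjoint_left.2 fun x hx hxV => ?_,
    fun m n hmn => Finset.disjoint_left.2 fun x hxm hxn => ?_⟩
  · obtain ⟨a, rfl⟩ := hblock n hx
    have := Finset.le_sup (f := id) hxV
    simp only [id] at this
    omega
  · obtain ⟨a, rfl⟩ := hblock m hxm
    obtain ⟨b, hb⟩ := hblock n hxn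
    exact hmn (Nat.pair_eq_pair.1 (Nat.add_left_cancel hb)).1.symm

theorem Con.sat_foldr_and (I : Interp F arF Pc arP D) (v : ℕ → D) :
    ∀ l : List (Con F arF Pc arP), (l.foldr Con.and Con.tru).Sat I v ↔ ∀ c ∈ l, c.Sat I v
  | [] => by simp [Sat]
  | c :: l => by simp [Sat, sat_foldr_and I v l]

theorem Con.mem_fv_foldr_and {x : ℕ} :
    ∀ l : List (Con F arF Pc arP), x ∈ (l.foldr Con.and Con.tru).fv ↔ ∃ c ∈ l, x ∈ c.fv
  | [] => by simp [fv]
  | c :: l => by simp [fv, mem_fv_foldr_and l]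

theorem sat_argsEqCon (I : Interp F arF Pc arP D) (v : ℕ → D) {n : ℕ} (u w : Fin n → Tm F arF) :
    (argsEqCon u w : Con F arF Pc arP).Sat I v ↔ ∀ i, (u i).eval I.fn v = (w i).eval I.fn v := by
  simp [argsEqCon, Con.sat_foldr_and, Con.Sat]

theorem fv_argsEqCon_subset {n : ℕ} (u w : Fin n → Tm F arF) :
    (argsEqCon u w : Con F arF Pc arP).fv ⊆ varsOf u ∪ varsOf w := by
  intro x
  simp only [argsEqCon, Con.mem_fv_foldr_and, List.mem_ofFn, exists_exists_eq_and, Con.fv,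
    Finset.mem_union, varsOf, Finset.mem_biUnion, Finset.mem_univ, true_and, forall_exists_index]
  exact fun i => Or.imp (⟨i, ·⟩) (⟨i, ·⟩)

theorem Rule.fv_hargs_subset (r : Rule F arF Pc arP Prd arPrd) (i : Fin (arPrd r.hp)) :
    (r.hargs i).fv ⊆ r.fv := by
  unfold Rule.fv
  exact (Finset.subset_biUnion_of_mem (fun i => (r.hargs i).fv) (Finset.mem_univ i)).trans
    (Finset.subset_union_left.trans Finset.subset_union_left)

theorem Rule.fv_con_subset (r : Rule F arF Pc arP Prd arPrd) : r.con.fv ⊆ r.fv :=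
  Finset.subset_union_right.trans Finset.subset_union_left

theorem Rule.fv_bargs_subset (r : Rule F arF Pc arP Prd arPrd) (i : Fin (arPrd r.bp)) :
    (r.bargs i).fv ⊆ r.fv := by
  unfold Rule.fv
  exact (Finset.subset_biUnion_of_mem (fun i => (r.bargs i).fv) (Finset.mem_univ i)).trans
    Finset.subset_union_right

theorem Query.fv_args_subset (S : Query F arF Pc arP Prd arPrd) (i : Fin (arPrd S.p)) :
    (S.args i).fv ⊆ S.fv := by
  unfold Query.fv
  exact (Finset.subset_biUnion_of_mem (fun i => (S.args i).fv) (Finset.mem_univ i)).trans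
    Finset.subset_union_left

theorem Query.fv_con_subset (S : Query F arF Pc arP Prd arPrd) : S.con.fv ⊆ S.fv :=
  Finset.subset_union_right

theorem sat_stepCon (I : Interp F arF Pc arP D) {r : Rule F arF Pc arP Prd arPrd}
    {S : Query F arF Pc arP Prd arPrd} (h : r.hp = S.p) (v : ℕ → D) :
    (stepCon r S h).Sat I v ↔
      (⟨r.hp, fun i => (r.hargs i).eval I.fn v⟩ : Σ p : Prd, Fin (arPrd p) → D) =
        ⟨S.p, fun i => (S.args i).eval I.fn v⟩ ∧ r.con.Sat I v ∧ S.con.Sat I v := by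
  obtain ⟨hp, hargs, con, bp, bargs⟩ := r
  obtain ⟨p, args, d⟩ := S
  dsimp only at h
  subst h
  simp [stepCon, Con.Sat, sat_argsEqCon, funext_iff]

theorem StepWith.fv_subset {I : Interp F arF Pc arP D} {r : Rule F arF Pc arP Prd arPrd}
    {S T : Query F arF Pc arP Prd arPrd} (hst : StepWith I r S T) : T.fv ⊆ r.fv ∪ S.fv := by
  obtain ⟨h, -, rfl⟩ := hst
  refine Finset.union_subset
    (Finset.biUnion_subset.2 fun i _ => (r.fv_bargs_subset i).trans Finset.subset_union_left)
    (Finset.union_subset ((fv_argsEqCon_subset _ _).trans (Finset.union_subset_union ?_ ?_))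
      (Finset.union_subset_union r.fv_con_subset S.fv_con_subset))
  · exact Finset.biUnion_subset.2 fun i _ => r.fv_hargs_subset _
  · exact Finset.subset_union_left

def Rule.resolventSet (I : Interp F arF Pc arP D) (r : Rule F arF Pc arP Prd arPrd)
    (A : Set (Σ p : Prd, Fin (arPrd p) → D)) : Set (Σ p : Prd, Fin (arPrd p) → D) :=
  { a | ∃ v : ℕ → D, r.con.Sat I v ∧ ⟨r.hp, fun i => (r.hargs i).eval I.fn v⟩ ∈ A ∧
      a = ⟨r.bp, fun i => (r.bargs i).eval I.fn v⟩ }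

theorem Rule.resolventSet_mono (I : Interp F arF Pc arP D) (r : Rule F arF Pc arP Prd arPrd)
    {A B : Set (Σ p : Prd, Fin (arPrd p) → D)} (hAB : A ⊆ B) :
    r.resolventSet I A ⊆ r.resolventSet I B :=
  fun _ ⟨v, hv, hA, ha⟩ => ⟨v, hv, hAB hA, ha⟩

theorem Rule.IsVariant.resolventSet_eq (I : Interp F arF Pc arP D)
    {r r' : Rule F arF Pc arP Prd arPrd} (hvar : r.IsVariant r')
    (A : Set (Σ p : Prd, Fin (arPrd p) → D)) : r'.resolventSet I A = r.resolventSet I A := by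
  obtain ⟨ρ, rfl⟩ := hvar
  ext a
  simp only [resolventSet, rename, Set.mem_ofPred_eq, Con.sat_rename, Tm.eval_rename]
  exact ⟨fun ⟨v, hv⟩ => ⟨v ∘ ρ, hv⟩, fun ⟨v, hv⟩ => ⟨v ∘ ρ.symm, by
    simpa [Function.comp_assoc] using hv⟩⟩

theorem StepWith.set_subset_resolventSet {I : Interp F arF Pc arP D}
    {r : Rule F arF Pc arP Prd arPrd} {S T : Query F arF Pc arP Prd arPrd}
    (hst : StepWith I r S T) : T.set I ⊆ r.resolventSet I (S.set I) := by
  obtain ⟨h, -, rfl⟩ := hst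
  rintro _ ⟨v, hv, rfl⟩
  obtain ⟨hhead, hr, hS⟩ := (sat_stepCon I h v).1 hv
  exact ⟨v, hr, hhead ▸ ⟨v, hS, rfl⟩, rfl⟩

theorem resolventSet_subset_set (I : Interp F arF Pc arP D) {r : Rule F arF Pc arP Prd arPrd}
    {S : Query F arF Pc arP Prd arPrd} (hdisj : Disjoint r.fv S.fv) (h : r.hp = S.p) :
    r.resolventSet I (S.set I) ⊆ (⟨r.bp, r.bargs, stepCon r S h⟩ : Query _ _ _ _ _ _).set I := by
  rintro _ ⟨v, hv, ⟨w, hw, hvw⟩, rfl⟩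
  -- `r` and `S` share no variable, so `v` and `w` glue to a single valuation.
  let u x := if x ∈ r.fv then v x else w x
  have huv : ∀ x ∈ r.fv, u x = v x := fun x hx => if_pos hx
  have huw : ∀ x ∈ S.fv, u x = w x := fun x hx => if_neg (Finset.disjoint_right.1 hdisj hx)
  have hhead : (fun i => (r.hargs i).eval I.fn u) = fun i => (r.hargs i).eval I.fn v :=
    funext fun i => Tm.eval_congr I.fn _ fun x hx => huv x (r.fv_hargs_subset i hx)
  have hargs : (fun i => (S.args i).eval I.fn u) = fun i => (S.args i).eval I.fn w :=
    funext fun i => Tm.eval_congr I.fn _ fun x hx => huw x (S.fv_args_subset i hx)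
  refine ⟨u, (sat_stepCon I h u).2 ⟨hhead ▸ hargs ▸ hvw, ?_, ?_⟩, ?_⟩
  · exact (Con.sat_congr I _ fun x hx => huv x (r.fv_con_subset hx)).2 hv
  · exact (Con.sat_congr I _ fun x hx => huw x (S.fv_con_subset hx)).2 hw
  · exact congrArg (Sigma.mk r.bp) <| funext fun i =>
      (Tm.eval_congr I.fn _ fun x hx => huv x (r.fv_bargs_subset i hx)).symm

theorem StepWith.exists_lift {I : Interp F arF Pc arP D} {r r' : Rule F arF Pc arP Prd arPrd}
    {S T S' : Query F arF Pc arP Prd arPrd} (hst : StepWith I r S T)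
    (hsub : S.set I ⊆ S'.set I) (hvar : r.IsVariant r') (hdisj : Disjoint r'.fv S'.fv) :
    ∃ T', StepWith I r' S' T' ∧ T.set I ⊆ T'.set I := by
  have hT : T.set I ⊆ r'.resolventSet I (S'.set I) :=
    hvar.resolventSet_eq I _ ▸ hst.set_subset_resolventSet.trans (r.resolventSet_mono I hsub)
  obtain ⟨h, ⟨v, hv⟩, rfl⟩ := hst
  have hvT : ⟨r.bp, fun i => (r.bargs i).eval I.fn v⟩ ∈ (⟨r.bp, r.bargs, stepCon r S h⟩ :
      Query _ _ _ _ _ _).set I := ⟨v, hv, rfl⟩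
  obtain ⟨_, -, ⟨_, -, hhead⟩, -⟩ := hT hvT
  have hT' := resolventSet_subset_set I hdisj (congrArg Sigma.fst hhead)
  obtain ⟨u, hu, -⟩ := hT' (hT hvT)
  exact ⟨_, ⟨_, ⟨u, hu⟩, rfl⟩, hT.trans hT'⟩

end CLP

open CLP in
/-- if `S₀` loops w.r.t. `P` then every query `S₀'` more general
than `S₀` also loops w.r.t. `P`. -/
theorem stmt18 {F : Type} {arF : F → ℕ} {Pc : Type} {arP : Pc → ℕ}
    {Prd : Type} {arPrd : Prd → ℕ} {D : Type} (I : Interp F arF Pc arP D)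
    (P : Set (Rule F arF Pc arP Prd arPrd)) (S₀ S₀' : Query F arF Pc arP Prd arPrd)
    (h : Loops I P S₀) (hmg : MoreGen I S₀' S₀) :
    Loops I P S₀' := by
  obtain ⟨S, rv, rfl, hstep⟩ := h
  obtain ⟨rv', hvar, hfresh, hapart⟩ := exists_variants_pairwise_disjoint rv S₀'.fv
  -- Invariant at stage `n`: the lifted query is more general than `S n` and shares no
  -- variable with the input rules of the remaining steps.
  obtain ⟨W, hW0, hW⟩ := exists_seq_of_forall_exists
    (fun n (W : Query F arF Pc arP Prd arPrd) =>
      (S n).set I ⊆ W.set I ∧ ∀ k ≥ n, Disjoint (rv' k).fv W.fv)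
    (fun n W W' => StepWith I (rv' n) W W') (a := S₀')
    ⟨hmg, fun k _ => hfresh k⟩ fun n W ⟨hsub, hdisj⟩ => by
      obtain ⟨T', hstep', hsub'⟩ := (hstep n).2.2.2.exists_lift hsub (hvar n) (hdisj n le_rfl)
      refine ⟨T', hstep', hsub', fun k hk => Finset.disjoint_of_subset_right hstep'.fv_subset ?_⟩
      exact Finset.disjoint_union_right.2 ⟨hapart (by omega), hdisj k (by omega)⟩
  refine ⟨W, rv', hW0, fun n => ⟨?_, hfresh n, fun m hm => hapart hm.ne', hW n⟩⟩
  obtain ⟨r, hrP, hr⟩ := (hstep n).1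
  exact ⟨r, hrP, hr.trans (hvar n)⟩
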